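/- arXiv:1204.4308 — 2 statements merged into one kernel-verified Lean document; each statement's English description precedes it below -/
import Mathlib

section
/- Let A be a nonempty set and B a nonempty bounded subset of ℓ∞(A). Define φ : A → ℓ∞(B) by φ(a)(b) = b(a) for a ∈ A, b ∈ B. Then (1/2)·χ₀(B) ≤ χ₀(φ(A)) ≤ 2·χ₀(B), where χ₀(B) is computed in ℓ∞(A) and χ₀(φ(A)) in ℓ∞(B). -/
open Filter Metric Set

noncomputable section

/-- The non-symmetrized Hausdorff distance `d̂(A,B) = sup_{a ∈ A} dist(a, B)`,
formulated with an abstract distance function `d`. -/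
def hdD {Z : Type*} (d : Z → Z → ℝ) (A B : Set Z) : ℝ :=
  ⨆ a : A, ⨅ b : B, d a b

/-- `χ₀(A) = inf { d̂(A,F) : F ⊆ A finite nonempty }`. -/
def chi0D {Z : Type*} (d : Z → Z → ℝ) (A : Set Z) : ℝ :=
  sInf {r | ∃ F : Set Z, F ⊆ A ∧ F.Finite ∧ F.Nonempty ∧ r = hdD d A F}

/-!
Both inequalities are instances of one estimate for a bounded kernel `K : X → Y → E` with values
in a proper space: the rows `K x`, in the sup distance over `Y`, have `χ₀` at most twice that of
the columns `K · y`, in the sup distance over `X`. Let the finite set of columns `F` be within `r`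
of every column. Restricted to the finitely many columns in `F`, the rows form a bounded set in
`E^F`, hence have a finite `ε`-net `X₀`. A row `x` is then within `2r + ε` of a net row `x₀`: go
from column `y` to a column `y₀ ∈ F` within `r`, compare `x` and `x₀` at `y₀`, and come back.
Applied to `(a, b) ↦ b a` and to its transpose this gives the two bounds.
-/

section HausdorffExcess

variable {Z : Type*} {d : Z → Z → ℝ} {S T F : Set Z}

lemma hdD_nonneg (hd : ∀ u v, 0 ≤ d u v) : 0 ≤ hdD d S T :=
  Real.iSup_nonneg fun _ => Real.iInf_nonneg fun _ => hd _ _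

lemma hdD_le {r : ℝ} (hd : ∀ u v, 0 ≤ d u v) (hr : 0 ≤ r) (h : ∀ u ∈ S, ∃ v ∈ T, d u v ≤ r) :
    hdD d S T ≤ r := by
  refine Real.iSup_le (fun u => ?_) hr
  obtain ⟨v, hv, huv⟩ := h u u.2
  exact ciInf_le_of_le ⟨0, by rintro _ ⟨w, rfl⟩; exact hd _ _⟩ ⟨v, hv⟩ huv

/-- On a finite set the infimum defining `dist(u, T)` is attained. -/
lemma exists_le_hdD {M : ℝ} (hT : T.Finite) (hTne : T.Nonempty)
    (hM : ∀ u ∈ S, ∀ v ∈ T, d u v ≤ M) {u : Z} (hu : u ∈ S) : ∃ v ∈ T, d u v ≤ hdD d S T := by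
  have := hT.to_subtype
  have := hTne.to_subtype
  obtain ⟨v, hv⟩ := exists_eq_ciInf_of_finite (f := fun v : T => d u v)
  have hbdd : BddAbove (range fun u : S => ⨅ v : T, d u v) := by
    refine ⟨M, ?_⟩
    rintro _ ⟨w, rfl⟩
    exact (ciInf_le (finite_range _).bddBelow v).trans (hM w w.2 v v.2)
  exact ⟨v, v.2, hv ▸ le_ciSup hbdd ⟨u, hu⟩⟩

lemma chi0D_le_hdD (hd : ∀ u v, 0 ≤ d u v) (hFS : F ⊆ S) (hF : F.Finite) (hFne : F.Nonempty) :
    chi0D d S ≤ hdD d S F :=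
  csInf_le ⟨0, by rintro _ ⟨G, -, -, -, rfl⟩; exact hdD_nonneg hd⟩ ⟨F, hFS, hF, hFne, rfl⟩

lemma le_chi0D {r : ℝ} (hS : S.Nonempty)
    (h : ∀ F ⊆ S, F.Finite → F.Nonempty → r ≤ hdD d S F) : r ≤ chi0D d S := by
  obtain ⟨s, hs⟩ := hS
  refine le_csInf ⟨_, {s}, singleton_subset_iff.mpr hs, finite_singleton s,
    singleton_nonempty s, rfl⟩ ?_
  rintro _ ⟨F, hFS, hF, hFne, rfl⟩
  exact h F hFS hF hFne

end HausdorffExcess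

section SupDist

variable {ι E : Type*} [SeminormedAddCommGroup E]

def supDist (u v : ι → E) : ℝ := ⨆ i, ‖u i - v i‖

lemma supDist_nonneg (u v : ι → E) : 0 ≤ supDist u v :=
  Real.iSup_nonneg fun _ => norm_nonneg _

lemma supDist_le {u v : ι → E} {r : ℝ} (hr : 0 ≤ r) (h : ∀ i, ‖u i - v i‖ ≤ r) :
    supDist u v ≤ r :=
  Real.iSup_le h hr

variable {u v : ι → E} {C : ℝ}

lemma norm_sub_le_two_mul_of_norm_le (hu : ∀ i, ‖u i‖ ≤ C) (hv : ∀ i, ‖v i‖ ≤ C) (i : ι) :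
    ‖u i - v i‖ ≤ 2 * C := by
  linarith [norm_sub_le (u i) (v i), hu i, hv i]

lemma supDist_le_two_mul_of_norm_le [Nonempty ι] (hu : ∀ i, ‖u i‖ ≤ C) (hv : ∀ i, ‖v i‖ ≤ C) :
    supDist u v ≤ 2 * C :=
  ciSup_le (norm_sub_le_two_mul_of_norm_le hu hv)

lemma norm_sub_le_supDist_of_norm_le (hu : ∀ i, ‖u i‖ ≤ C) (hv : ∀ i, ‖v i‖ ≤ C) (i : ι) :
    ‖u i - v i‖ ≤ supDist u v :=
  le_ciSup ⟨2 * C, forall_mem_range.2 (norm_sub_le_two_mul_of_norm_le hu hv)⟩ i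

end SupDist

lemma exists_finite_net_of_totallyBounded_range {X M : Type*} [PseudoMetricSpace M] [Nonempty X]
    {ψ : X → M} (hψ : TotallyBounded (range ψ)) {ε : ℝ} (hε : 0 < ε) :
    ∃ X₀ : Set X, X₀.Finite ∧ X₀.Nonempty ∧ ∀ x, ∃ x₀ ∈ X₀, dist (ψ x) (ψ x₀) < ε := by
  obtain ⟨t, hts, htfin, hcover⟩ := finite_approx_of_totallyBounded hψ ε hε
  rw [← image_univ] at hts
  obtain ⟨X₀, -, hX₀fin, rfl⟩ := exists_subset_image_finite_and.mp ⟨t, hts, htfin, rfl⟩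
  have hnear (x : X) : ∃ x₀ ∈ X₀, dist (ψ x) (ψ x₀) < ε := by
    simpa using hcover (mem_range_self x)
  obtain ⟨x₀, hx₀, -⟩ := hnear (Classical.arbitrary X)
  exact ⟨X₀, hX₀fin, ⟨x₀, hx₀⟩, hnear⟩

lemma totallyBounded_range_eval {X E : Type*} [SeminormedAddCommGroup E] [ProperSpace E]
    {F : Set (X → E)} [Fintype F] {C : ℝ} (hC : 0 ≤ C) (hF : ∀ g ∈ F, ∀ x, ‖g x‖ ≤ C) :
    TotallyBounded (range fun x (g : F) => (g : X → E) x) := by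
  refine (isCompact_closedBall (0 : F → E) C).totallyBounded.subset ?_
  rintro _ ⟨x, rfl⟩
  exact mem_closedBall_zero_iff.2 ((pi_norm_le_iff_of_nonneg hC).2 fun g => hF g g.2 x)

section Transpose

variable {X Y E : Type*} [SeminormedAddCommGroup E] [ProperSpace E] {K : X → Y → E} {C : ℝ}

lemma exists_hdD_range_le_two_mul_hdD_range_swap [Nonempty X] (hK : ∀ x y, ‖K x y‖ ≤ C)
    {F : Set (X → E)} (hF : F ⊆ range fun y x => K x y) (hFfin : F.Finite) (hFne : F.Nonempty)
    {ε : ℝ} (hε : 0 < ε) :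
    ∃ G ⊆ range K, G.Finite ∧ G.Nonempty ∧
      hdD supDist (range K) G ≤ 2 * hdD supDist (range fun y x => K x y) F + ε := by
  have := hFfin.fintype
  set r := hdD supDist (range fun y x => K x y) F
  have hr : 0 ≤ r := hdD_nonneg supDist_nonneg
  have hcol (y : Y) : ∃ y₀, (fun x => K x y₀) ∈ F ∧ ∀ x, ‖K x y - K x y₀‖ ≤ r := by
    obtain ⟨_, hgF, hg⟩ := exists_le_hdD (M := 2 * C) hFfin hFne
      (by rintro _ ⟨y, rfl⟩ g hg; obtain ⟨y₀, rfl⟩ := hF hg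
          exact supDist_le_two_mul_of_norm_le (hK · y) (hK · y₀))
      (mem_range_self y)
    obtain ⟨y₀, rfl⟩ := hF hgF
    exact ⟨y₀, hgF, fun x => (norm_sub_le_supDist_of_norm_le (hK · y) (hK · y₀) x).trans hg⟩
  have hC : 0 ≤ C := by
    obtain ⟨y, -⟩ := hF hFne.some_mem
    exact (norm_nonneg _).trans (hK (Classical.arbitrary X) y)
  set ψ : X → F → E := fun x g => (g : X → E) x
  have hψ : TotallyBounded (range ψ) := totallyBounded_range_eval hC fun g hg x => by
    obtain ⟨y, rfl⟩ := hF hg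
    exact hK x y
  obtain ⟨X₀, hX₀fin, hX₀ne, hnet⟩ := exists_finite_net_of_totallyBounded_range hψ hε
  refine ⟨K '' X₀, image_subset_range _ _, hX₀fin.image _, hX₀ne.image _,
    hdD_le supDist_nonneg (by positivity) ?_⟩
  rintro _ ⟨x, rfl⟩
  obtain ⟨x₀, hx₀, hxx₀⟩ := hnet x
  refine ⟨K x₀, mem_image_of_mem _ hx₀, supDist_le (by positivity) fun y => ?_⟩
  obtain ⟨y₀, hy₀F, hy₀⟩ := hcol y
  have hx₀y₀ : ‖K x y₀ - K x₀ y₀‖ ≤ ε :=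
    (norm_le_pi_norm (ψ x - ψ x₀) ⟨_, hy₀F⟩).trans ((dist_eq_norm _ _).symm.trans_lt hxx₀).le
  calc ‖K x y - K x₀ y‖ = ‖(K x y - K x y₀) + (K x y₀ - K x₀ y₀) + (K x₀ y₀ - K x₀ y)‖ := by
        congr 1; abel
    _ ≤ ‖K x y - K x y₀‖ + ‖K x y₀ - K x₀ y₀‖ + ‖K x₀ y₀ - K x₀ y‖ := norm_add₃_le
    _ ≤ r + ε + r := by
        gcongr
        · exact hy₀ x
        · rw [norm_sub_rev]; exact hy₀ x₀
    _ = 2 * r + ε := by ring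

theorem chi0D_range_le_two_mul_chi0D_range_swap [Nonempty X] [Nonempty Y]
    (hK : ∀ x y, ‖K x y‖ ≤ C) :
    chi0D supDist (range K) ≤ 2 * chi0D supDist (range fun y x => K x y) := by
  suffices chi0D supDist (range K) / 2 ≤ chi0D supDist (range fun y x => K x y) by linarith
  refine le_chi0D (range_nonempty _) fun F hF hFfin hFne => le_of_forall_pos_le_add fun ε hε => ?_
  obtain ⟨G, hG, hGfin, hGne, hGF⟩ :=
    exists_hdD_range_le_two_mul_hdD_range_swap hK hF hFfin hFne (by positivity : 0 < 2 * ε)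
  linarith [chi0D_le_hdD supDist_nonneg hG hGfin hGne]

end Transpose

/-- Let `A` be a nonempty set and `B` a nonempty bounded subset of `ℓ∞(A)`.
Define `φ : A → ℓ∞(B)` by `φ(a)(b) = b(a)`. Then
`(1/2)·χ₀(B) ≤ χ₀(φ(A)) ≤ 2·χ₀(B)`, where `χ₀(B)` is computed in the sup
distance of `ℓ∞(A)` and `χ₀(φ(A))` in the sup distance of `ℓ∞(B)`. -/
theorem chi0_canonical_embedding
    {A : Type*} [Nonempty A] {𝕜 : Type*} [RCLike 𝕜]
    (B : Set (A → 𝕜)) (hB : B.Nonempty)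
    (hbdd : ∃ C : ℝ, ∀ b ∈ B, ∀ a : A, ‖b a‖ ≤ C) :
    (1 / 2) * chi0D (fun u v : A → 𝕜 => ⨆ a : A, ‖u a - v a‖) B ≤
        chi0D (fun u v : ↥B → 𝕜 => ⨆ b : B, ‖u b - v b‖)
          (range fun a : A => fun b : B => (b : A → 𝕜) a) ∧
      chi0D (fun u v : ↥B → 𝕜 => ⨆ b : B, ‖u b - v b‖)
          (range fun a : A => fun b : B => (b : A → 𝕜) a) ≤
        2 * chi0D (fun u v : A → 𝕜 => ⨆ a : A, ‖u a - v a‖) B := by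
  obtain ⟨C, hC⟩ := hbdd
  have := hB.to_subtype
  have hK (a : A) (b : B) : ‖(b : A → 𝕜) a‖ ≤ C := hC b b.2 a
  have hB_range : range (fun b : B => fun a : A => (b : A → 𝕜) a) = B := Subtype.range_coe
  have h₁ := chi0D_range_le_two_mul_chi0D_range_swap (K := fun (b : B) (a : A) => (b : A → 𝕜) a)
    (fun b a => hK a b)
  have h₂ := chi0D_range_le_two_mul_chi0D_range_swap (K := fun (a : A) (b : B) => (b : A → 𝕜) a) hK
  rw [hB_range] at h₁ h₂
  unfold supDist at h₁ h₂
  exact ⟨by linarith, h₂⟩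
end
end

section
/- Let Ω be a Hausdorff locally compact space, let (μ_k) be a bounded sequence of finite complex Radon measures on Ω, let (F_k) be a sequence of pairwise disjoint compact subsets of Ω, and let c > 0 be such that |μ_k(F_k)| > c for each k ∈ ℕ. Then for every ε > 0 there exist a subsequence (μ_{k_n}) and a sequence (U_n) of pairwise disjoint open subsets of Ω such that |μ_{k_n}(U_n)| > c − ε for each n ∈ ℕ. -/
open Filter Metric Set MeasureTheory
open scoped Topology Function

noncomputable section

/-- The total variation `|μ|(H)` of a vector measure `μ` on a set `H`:
the supremum of `∑ ‖μ(D_i)‖` over finite disjoint families of measurable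
subsets of `H`. -/
def variation {α : Type*} [MeasurableSpace α] {E : Type*} [NormedAddCommGroup E]
    (μ : VectorMeasure α E) (H : Set α) : ℝ :=
  sSup {r | ∃ (n : ℕ) (D : Fin n → Set α), (∀ i, MeasurableSet (D i)) ∧
    Pairwise (Disjoint on D) ∧ (∀ i, D i ⊆ H) ∧ r = ∑ i, ‖μ (D i)‖}

/-- A vector measure on a topological measurable space is Radon if it is
inner regular by compact sets and outer regular by open sets, in variation. -/
def IsRadonVM {Ω : Type*} [TopologicalSpace Ω] [MeasurableSpace Ω] {E : Type*}
    [NormedAddCommGroup E] (μ : VectorMeasure Ω E) : Prop :=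
  ∀ A : Set Ω, MeasurableSet A → ∀ ε > 0,
    (∃ K, K ⊆ A ∧ IsCompact K ∧ variation μ (A \ K) < ε) ∧
    (∃ U, A ⊆ U ∧ IsOpen U ∧ variation μ (U \ A) < ε)

/-!
The variations `|μ_k|` are finite measures of mass at most `C`. If `F_{n_1}, …, F_{n_T}` have
pairwise disjoint open neighbourhoods `V_i` and `T η > C`, no single `|μ_m|` gives mass `η` to
every shell `V_i \ F_{n_i}`; hence, among any infinitely many indices, some `F_n` has a
neighbourhood `W` whose shell is `η`-small for infinitely many of the other measures. Iterating
with `η_i = ε 2^{-i} / 4` yields a subsequence `k` and neighbourhoods `W_i ⊇ F_{k_i}` such that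
`|μ_{k_j}|(F_{k_j} ∩ closure W_i) < η_i` for `i < j`, and, by outer regularity,
`|μ_{k_i}|(W_i \ F_{k_i}) < ε / 2`. The open sets `U_n = W_n \ ⋃_{i<n} closure W_i` are pairwise
disjoint and differ from `F_{k_n}` by less than `ε` in `|μ_{k_n}|`-measure.
-/

namespace MeasureTheory

variable {α E : Type*} [MeasurableSpace α] [NormedAddCommGroup E]

instance ComplexMeasure.isFiniteMeasure_variation (μ : ComplexMeasure α) :
    IsFiniteMeasure μ.variation := by
  refine isFiniteMeasure_of_le (μ.re.totalVariation + μ.im.totalVariation) <|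
    VectorMeasure.variation_le_of_forall_enorm_le fun E _ => ?_
  calc ‖μ E‖ₑ = ENNReal.ofReal ‖μ E‖ := (ofReal_norm _).symm
    _ ≤ ENNReal.ofReal (‖μ.re E‖ + ‖μ.im E‖) := by
        gcongr
        exact Complex.norm_le_abs_re_add_abs_im _
    _ = ‖μ.re E‖ₑ + ‖μ.im E‖ₑ := by
        rw [ENNReal.ofReal_add (norm_nonneg _) (norm_nonneg _), ofReal_norm, ofReal_norm]
    _ ≤ μ.re.totalVariation E + μ.im.totalVariation E :=
        add_le_add (SignedMeasure.enorm_le_totalVariation _ _)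
          (SignedMeasure.enorm_le_totalVariation _ _)

namespace VectorMeasure

variable (μ : VectorMeasure α E) [IsFiniteMeasure μ.variation]

theorem norm_apply_le_variation_real (s : Set α) : ‖μ s‖ ≤ μ.variation.real s := by
  rw [measureReal_def, ← ENNReal.ofReal_le_iff_le_toReal (measure_ne_top _ _), ofReal_norm]
  exact μ.enorm_measure_le_variation s

theorem norm_sub_le_variation_real_sdiff_add {A B : Set α} (hA : MeasurableSet A)
    (hB : MeasurableSet B) :
    ‖μ A - μ B‖ ≤ μ.variation.real (A \ B) + μ.variation.real (B \ A) := by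
  have hsplit : ∀ {S T : Set α}, MeasurableSet S → MeasurableSet T →
      μ S = μ (S \ T) + μ (S ∩ T) := fun hS hT => by
    rw [← μ.of_union (disjoint_sdiff_left.mono_right inter_subset_right) (hS.diff hT)
      (hS.inter hT), sdiff_union_inter]
  calc ‖μ A - μ B‖ = ‖μ (A \ B) - μ (B \ A)‖ := by
        rw [hsplit hA hB, hsplit hB hA, inter_comm B A, add_sub_add_right_eq_sub]
    _ ≤ ‖μ (A \ B)‖ + ‖μ (B \ A)‖ := norm_sub_le _ _
    _ ≤ _ := add_le_add (μ.norm_apply_le_variation_real _) (μ.norm_apply_le_variation_real _)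

theorem norm_apply_sub_variation_real_le {F W B : Set α} (hF : MeasurableSet F)
    (hW : MeasurableSet W) (hB : MeasurableSet B) (hFW : F ⊆ W) :
    ‖μ F‖ - μ.variation.real (W \ F) - μ.variation.real (F ∩ B) ≤ ‖μ (W \ B)‖ := by
  have hFB : μ.variation.real (F \ (W \ B)) ≤ μ.variation.real (F ∩ B) :=
    measureReal_mono fun x hx => ⟨hx.1, not_not.1 fun hxB => hx.2 ⟨hFW hx.1, hxB⟩⟩
  have hWF : μ.variation.real ((W \ B) \ F) ≤ μ.variation.real (W \ F) :=
    measureReal_mono (sdiff_subset_sdiff_left sdiff_subset)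
  linarith [norm_sub_norm_le (μ F) (μ (W \ B)),
    μ.norm_sub_le_variation_real_sdiff_add hF (hW.diff hB)]

end VectorMeasure

end MeasureTheory

theorem variation_eq_variation_real {α E : Type*} [MeasurableSpace α] [NormedAddCommGroup E]
    (μ : VectorMeasure α E) [IsFiniteMeasure μ.variation] {H : Set α} (hH : MeasurableSet H) :
    variation μ H = μ.variation.real H := by
  have hzero : (0 : ℝ) ∈ {r | ∃ (n : ℕ) (D : Fin n → Set α), (∀ i, MeasurableSet (D i)) ∧
      Pairwise (Disjoint on D) ∧ (∀ i, D i ⊆ H) ∧ r = ∑ i, ‖μ (D i)‖} :=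
    ⟨0, Fin.elim0, fun i => i.elim0, Subsingleton.pairwise, fun i => i.elim0, by simp⟩
  refine csSup_eq_of_forall_le_of_forall_lt_exists_gt ⟨0, hzero⟩ ?_ fun w hw => ?_
  · rintro r ⟨n, D, hDm, hDd, hDH, rfl⟩
    calc ∑ i, ‖μ (D i)‖ ≤ ∑ i, μ.variation.real (D i) :=
          Finset.sum_le_sum fun i _ => μ.norm_apply_le_variation_real _
      _ = μ.variation.real (⋃ i, D i) := (measureReal_iUnion_fintype hDd hDm).symm
      _ ≤ μ.variation.real H := measureReal_mono (iUnion_subset hDH)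
  rcases lt_or_ge w 0 with hw0 | hw0
  · exact ⟨0, hzero, hw0⟩
  obtain ⟨P, hPH, hPd, hPm, hlt⟩ := μ.exists_lt_sum_of_lt_variation hH
    ((ENNReal.ofReal_lt_iff_lt_toReal hw0 (measure_ne_top _ _)).2 hw)
  let D (i : Fin P.card) : P := P.equivFin.symm i
  have hsum : ∑ i, ‖μ (D i)‖ = ∑ p ∈ P, ‖μ p‖ := by
    rw [← Finset.sum_coe_sort P, ← P.equivFin.symm.sum_comp]
  refine ⟨∑ i, ‖μ (D i)‖, ⟨P.card, fun i => D i, fun i => hPm _ (D i).2,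
    fun i j hij => hPd (D i).2 (D j).2 ?_, fun i => hPH _ (D i).2, rfl⟩, ?_⟩
  · simpa [D, Subtype.ext_iff] using hij
  rw [hsum, ← ENNReal.ofReal_lt_ofReal_iff_of_nonneg hw0,
    ENNReal.ofReal_sum_of_nonneg fun _ _ => norm_nonneg _]
  simpa only [ofReal_norm] using hlt

theorem exists_strictMono_of_forall_infinite {α : Type*} (Q : ℕ → α → Prop)
    (P : ℕ → α → ℕ → Prop)
    (h : ∀ i (M : Set ℕ), M.Infinite → ∃ n ∈ M, ∃ a, Q n a ∧ {m ∈ M | P i a m}.Infinite) :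
    ∃ (k : ℕ → ℕ) (a : ℕ → α), StrictMono k ∧ (∀ i, Q (k i) (a i)) ∧
      ∀ i j, i < j → P i (a i) (k j) := by
  choose n hnM a hQ hinf using h
  let next (i : ℕ) (M : {M : Set ℕ // M.Infinite}) : {M : Set ℕ // M.Infinite} :=
    ⟨{m ∈ M.1 | P i (a i M.1 M.2) m} \ Iic (n i M.1 M.2), (hinf i M.1 M.2).sdiff (finite_Iic _)⟩
  let S (i : ℕ) : {M : Set ℕ // M.Infinite} := Nat.rec ⟨univ, infinite_univ⟩ next i
  have hS : Antitone fun i => (S i).1 :=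
    antitone_nat_of_succ_le fun i => sdiff_subset.trans (sep_subset _ _)
  have hlater : ∀ i j, i < j → n j (S j).1 (S j).2 ∈ (next i (S i)).1 := fun i j hij =>
    hS (Nat.succ_le_of_lt hij) (hnM _ _ _)
  refine ⟨fun i => n i (S i).1 (S i).2, fun i => a i (S i).1 (S i).2,
    strictMono_nat_of_lt_succ fun i => ?_, fun i => hQ _ _ _, fun i j hij => (hlater i j hij).1.2⟩
  simpa using (hlater i (i + 1) i.lt_succ_self).2

section Separation

variable {Ω : Type*} [TopologicalSpace Ω] [T2Space Ω] [MeasurableSpace Ω]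
  [OpensMeasurableSpace Ω] (ν : ℕ → Measure Ω) [∀ m, IsFiniteMeasure (ν m)]
  {C : ℝ} {F : ℕ → Set Ω} {M : Set ℕ} {η : ℝ}

theorem exists_isOpen_measureReal_sdiff_lt_infinite (hC : ∀ m, (ν m).real univ ≤ C)
    (hF : ∀ n, IsCompact (F n)) (hFd : Pairwise (Disjoint on F)) (hM : M.Infinite)
    (hη : 0 < η) :
    ∃ n ∈ M, ∃ W, IsOpen W ∧ F n ⊆ W ∧ {m ∈ M | (ν m).real (W \ F n) < η}.Infinite := by
  by_contra! hfin
  obtain ⟨T, hT⟩ := exists_nat_gt (C / η)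
  let K (i : Fin T) : Set Ω := F (hM.natEmbedding _ i)
  have hKd : Pairwise (Disjoint on fun i => 𝓝ˢ (K i)) := fun i j hij =>
    separatedNhds_iff_disjoint.1 <| SeparatedNhds.of_isCompact_isCompact (hF _) (hF _) <|
      hFd fun h => hij (Fin.val_injective ((hM.natEmbedding _).injective (Subtype.ext h)))
  obtain ⟨V, hV, hVd⟩ := hKd.exists_mem_filter_basis_of_disjoint fun i => hasBasis_nhdsSet (K i)
  have hbad : (⋃ i, {m ∈ M | (ν m).real (V i \ K i) < η}).Finite :=
    finite_iUnion fun i => hfin _ (hM.natEmbedding _ i).2 _ (hV i).1 (hV i).2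
  obtain ⟨m, hmM, hm⟩ := (hM.sdiff hbad).nonempty
  have hge : ∀ i, η ≤ (ν m).real (V i \ K i) := fun i => by
    by_contra! hlt
    exact hm (mem_iUnion.2 ⟨i, hmM, hlt⟩)
  have hsum : ∑ i, (ν m).real (V i \ K i) ≤ (ν m).real univ := by
    rw [← measureReal_iUnion_fintype (hVd.mono fun i j h => h.mono sdiff_subset sdiff_subset)
      fun i => (hV i).1.measurableSet.diff (hF _).isClosed.measurableSet]
    exact measureReal_mono (subset_univ _)
  have hTη : (T : ℝ) * η ≤ ∑ i, (ν m).real (V i \ K i) := by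
    simpa using Finset.card_nsmul_le_sum Finset.univ _ η fun i _ => hge i
  have := (div_lt_iff₀ hη).1 hT
  linarith [hC m]

theorem exists_isOpen_measureReal_inter_closure_lt_infinite [LocallyCompactSpace Ω] {δ : ℝ}
    (hC : ∀ m, (ν m).real univ ≤ C) (hF : ∀ n, IsCompact (F n)) (hFd : Pairwise (Disjoint on F))
    (hM : M.Infinite) (hη : 0 < η)
    (hout : ∀ n, ∃ Y, IsOpen Y ∧ F n ⊆ Y ∧ (ν n).real (Y \ F n) < δ) :
    ∃ n ∈ M, ∃ W, (IsOpen W ∧ F n ⊆ W ∧ (ν n).real (W \ F n) < δ) ∧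
      {m ∈ M | (ν m).real (F m ∩ closure W) < η}.Infinite := by
  obtain ⟨n, hnM, W, hW, hFW, hinf⟩ :=
    exists_isOpen_measureReal_sdiff_lt_infinite ν hC hF hFd hM hη
  obtain ⟨Y, hY, hFY, hYδ⟩ := hout n
  obtain ⟨V, hV, hFV, hVWY, -⟩ :=
    exists_open_between_and_isCompact_closure (hF n) (hW.inter hY) (subset_inter hFW hFY)
  refine ⟨n, hnM, V, ⟨hV, hFV, ?_⟩, (hinf.sdiff (finite_singleton n)).mono ?_⟩
  · exact (measureReal_mono (sdiff_subset_sdiff_left (subset_closure.trans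
      (hVWY.trans inter_subset_right)))).trans_lt hYδ
  · rintro m ⟨⟨hmM, hm⟩, hmn⟩
    have hsub : F m ∩ closure V ⊆ W \ F n := fun x hx =>
      ⟨(hVWY hx.2).1, fun hxn => (hFd hmn).le_bot ⟨hx.1, hxn⟩⟩
    exact ⟨hmM, (measureReal_mono hsub).trans_lt hm⟩

end Separation

theorem exists_subseq_disjoint_open_of_disjoint_compact_general
    {Ω : Type*} [TopologicalSpace Ω] [T2Space Ω] [LocallyCompactSpace Ω]
    [MeasurableSpace Ω] [BorelSpace Ω]
    (μ : ℕ → ComplexMeasure Ω)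
    (hRadon : ∀ k, IsRadonVM (μ k))
    (hbdd : ∃ C : ℝ, ∀ k, variation (μ k) univ ≤ C)
    (F : ℕ → Set Ω) (hFcpt : ∀ k, IsCompact (F k)) (hFdisj : Pairwise (Disjoint on F))
    (c : ℝ) (hμF : ∀ k, c < ‖(μ k) (F k)‖) :
    ∀ ε > 0, ∃ k : ℕ → ℕ, StrictMono k ∧ ∃ U : ℕ → Set Ω,
      (∀ n, IsOpen (U n)) ∧ Pairwise (Disjoint on U) ∧
      ∀ n, c - ε < ‖(μ (k n)) (U n)‖ := by
  intro ε hε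
  obtain ⟨C, hC⟩ := hbdd
  have hCν : ∀ k, (μ k).variation.real univ ≤ C := fun k => by
    simpa only [variation_eq_variation_real _ MeasurableSet.univ] using hC k
  have hout : ∀ n, ∃ Y, IsOpen Y ∧ F n ⊆ Y ∧ (μ n).variation.real (Y \ F n) < ε / 2 := by
    intro n
    obtain ⟨-, Y, hFY, hY, hYε⟩ :=
      hRadon n (F n) (hFcpt n).measurableSet (ε / 2) (half_pos hε)
    rw [variation_eq_variation_real _ (hY.measurableSet.diff (hFcpt n).measurableSet)] at hYε
    exact ⟨Y, hY, hFY, hYε⟩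
  obtain ⟨k, W, hk, hW, hWk⟩ := exists_strictMono_of_forall_infinite _
    (fun i W m => (μ m).variation.real (F m ∩ closure W) < ε / 4 * (1 / 2) ^ i)
    fun i M hM => exists_isOpen_measureReal_inter_closure_lt_infinite (fun m => (μ m).variation)
      hCν hFcpt hFdisj hM (by positivity) hout
  set B : ℕ → Set Ω := fun n => ⋃ i ∈ Finset.range n, closure (W i)
  have hBclosed : ∀ n, IsClosed (B n) := fun n =>
    isClosed_biUnion_finset fun i _ => isClosed_closure
  refine ⟨k, hk, fun n => W n \ B n, fun n => (hW n).1.sdiff (hBclosed n), ?_, fun n => ?_⟩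
  · refine (pairwise_disjoint_on _).2 fun i j hij => disjoint_left.2 fun x hxi hxj => hxj.2 ?_
    exact mem_biUnion (Finset.mem_range.2 hij) (subset_closure hxi.1)
  have hFB : (μ (k n)).variation.real (F (k n) ∩ B n) ≤ ε / 2 := calc
    _ ≤ ∑ i ∈ Finset.range n, (μ (k n)).variation.real (F (k n) ∩ closure (W i)) := by
        rw [inter_iUnion₂]; exact measureReal_biUnion_finset_le _ _
    _ ≤ ∑ i ∈ Finset.range n, ε / 4 * (1 / 2) ^ i :=
        Finset.sum_le_sum fun i hi => (hWk i n (Finset.mem_range.1 hi)).le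
    _ ≤ ε / 4 * 2 := by rw [← Finset.mul_sum]; gcongr; exact sum_geometric_two_le n
    _ = ε / 2 := by ring
  linarith [hμF (k n), (hW n).2.2, (μ (k n)).norm_apply_sub_variation_real_le
    (hFcpt _).measurableSet (hW n).1.measurableSet (hBclosed n).measurableSet (hW n).2.1]

/-- Let `(μ_k)` be a bounded sequence of finite complex Radon measures on a
locally compact Hausdorff space `Ω`, `(F_k)` pairwise disjoint compact sets
with `|μ_k(F_k)| > c > 0`. Then for every `ε > 0` there are a subsequence
`(μ_{k_n})` and pairwise disjoint open sets `(U_n)` with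
`|μ_{k_n}(U_n)| > c - ε` for all `n`. -/
theorem exists_subseq_disjoint_open_of_disjoint_compact
    {Ω : Type*} [TopologicalSpace Ω] [T2Space Ω] [LocallyCompactSpace Ω]
    [MeasurableSpace Ω] [BorelSpace Ω]
    (μ : ℕ → ComplexMeasure Ω)
    (hRadon : ∀ k, IsRadonVM (μ k))
    (hbdd : ∃ C : ℝ, ∀ k, variation (μ k) univ ≤ C)
    (F : ℕ → Set Ω) (hFcpt : ∀ k, IsCompact (F k)) (hFdisj : Pairwise (Disjoint on F))
    (c : ℝ) (hc : 0 < c) (hμF : ∀ k, c < ‖(μ k) (F k)‖) :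
    ∀ ε > 0, ∃ k : ℕ → ℕ, StrictMono k ∧ ∃ U : ℕ → Set Ω,
      (∀ n, IsOpen (U n)) ∧ Pairwise (Disjoint on U) ∧
      ∀ n, c - ε < ‖(μ (k n)) (U n)‖ :=
  exists_subseq_disjoint_open_of_disjoint_compact_general μ hRadon hbdd F hFcpt hFdisj c hμF
end
end
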